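/- arXiv:1811.02011 — 5 statements merged into one kernel-verified Lean document; each statement's English description precedes it below -/
import Mathlib

section
/- Every Banach space that, for every ε > 0, admits a linear map J_ε into c satisfying (1−ε)‖x‖ ≤ ‖J_ε x‖ ≤ ‖x‖, has a separable dual. -/
set_option maxHeartbeats 1000000
open Filter

/-- The space `c` of convergent real sequences, as a subspace of `ℓ∞`
(bounded functions `ℕ → ℝ` with the sup norm). -/
noncomputable def convSeqs : Submodule ℝ (BoundedContinuousFunction ℕ ℝ) where
  carrier := {x | ∃ l : ℝ, Tendsto (fun n => x n) atTop (nhds l)}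
  add_mem' := by rintro x y ⟨A, hA⟩ ⟨B, hB⟩; exact ⟨A + B, by simpa using hA.add hB⟩
  zero_mem' := ⟨0, by simp⟩
  smul_mem' := by rintro r x ⟨A, hA⟩; exact ⟨r * A, by simpa using hA.const_mul r⟩

noncomputable instance instBCFNatSNACG : SeminormedAddCommGroup (BoundedContinuousFunction ℕ ℝ) :=
  BoundedContinuousFunction.instSeminormedAddCommGroup

noncomputable instance instDualConvSeqsNACG : NormedAddCommGroup (StrongDual ℝ convSeqs) :=
  ContinuousLinearMap.toNormedAddCommGroup

noncomputable instance instDualConvSeqsNS : NormedSpace ℝ (StrongDual ℝ convSeqs) :=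
  ContinuousLinearMap.toNormedSpace

namespace ConvSeqsAux

noncomputable def cLim (x : convSeqs) : ℝ := limUnder atTop (fun n => (x : BoundedContinuousFunction ℕ ℝ) n)

theorem cLim_spec (x : convSeqs) :
    Tendsto (fun n => (x : BoundedContinuousFunction ℕ ℝ) n) atTop (nhds (cLim x)) := by
  obtain ⟨l, hl⟩ := x.2
  rwa [cLim, hl.limUnder_eq]

/-- limit functional -/
noncomputable def L : StrongDual ℝ convSeqs :=
  LinearMap.mkContinuous
    { toFun := cLim
      map_add' := fun x y => by
        refine tendsto_nhds_unique ?_ ((cLim_spec x).add (cLim_spec y))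
        simpa using cLim_spec (x + y)
      map_smul' := fun r x => by
        have h1 := (cLim_spec x).const_mul r
        have h2 := cLim_spec (r • x)
        show cLim (r • x) = r * cLim x
        refine tendsto_nhds_unique ?_ h1
        simpa using h2 }
    1 (fun x => by
      simp only [LinearMap.coe_mk, AddHom.coe_mk, one_mul]
      refine le_of_tendsto ((cLim_spec x).norm) (Eventually.of_forall fun n => ?_)
      simpa using (x : BoundedContinuousFunction ℕ ℝ).norm_coe_le_norm n)

/-- evaluation functional -/
noncomputable def ev (n : ℕ) : StrongDual ℝ convSeqs :=
  LinearMap.mkContinuous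
    (
    { toFun := fun x => (x : BoundedContinuousFunction ℕ ℝ) n
      map_add' := fun x y => by simp
      map_smul' := fun r x => by simp } : convSeqs →ₗ[ℝ] ℝ)
    1 (fun x => by
      simp only [LinearMap.coe_mk, AddHom.coe_mk, one_mul]
      simpa using (x : BoundedContinuousFunction ℕ ℝ).norm_coe_le_norm n)

@[simp] theorem ev_apply (n : ℕ) (x : convSeqs) : ev n x = (x : BoundedContinuousFunction ℕ ℝ) n := rfl
@[simp] theorem L_apply (x : convSeqs) : L x = cLim x := rfl

/-- element of convSeqs from an eventually-constant... general: function tending to a limit, with bound -/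
noncomputable def mk (f : ℕ → ℝ) (M : ℝ) (hb : ∀ n, |f n| ≤ M) (l : ℝ)
    (hl : Tendsto f atTop (nhds l)) : convSeqs :=
  ⟨BoundedContinuousFunction.ofNormedAddCommGroup f
    (continuous_of_discreteTopology) M (fun n => by simpa using hb n), ⟨l, hl⟩⟩

@[simp] theorem mk_apply (f : ℕ → ℝ) (M hb l hl) (n : ℕ) : ((mk f M hb l hl : convSeqs) : BoundedContinuousFunction ℕ ℝ) n = f n := rfl

theorem norm_mk_le (f : ℕ → ℝ) (M hb l hl) (hM : 0 ≤ M) : ‖(mk f M hb l hl : convSeqs)‖ ≤ M := by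
  refine BoundedContinuousFunction.norm_le hM |>.2 fun n => by simpa using hb n

noncomputable def e (n : ℕ) : convSeqs :=
  mk (fun m => if m = n then 1 else 0) 1 (fun m => by by_cases hmn : m = n <;> simp [hmn]) 0
    (tendsto_nhds_of_eventually_eq (by filter_upwards [eventually_gt_atTop n] with m hm; simp [Nat.ne_of_gt hm]))

noncomputable def one : convSeqs := mk (fun _ => 1) 1 (by norm_num) 1 tendsto_const_nhds

end ConvSeqsAux

namespace ConvSeqsAux
open scoped BigOperators

theorem sum_abs_le (f : StrongDual ℝ convSeqs) (S : Finset ℕ) :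
    ∑ n ∈ S, |f (e n)| ≤ ‖f‖ := by
  set s : ℕ → ℝ := fun n => if f (e n) < 0 then -1 else 1 with hs
  have hsa : ∀ n, s n * f (e n) = |f (e n)| := by
    intro n
    by_cases hn : f (e n) < 0
    · simp only [hs, if_pos hn, abs_of_neg hn]; ring
    · simp only [hs, if_neg hn, abs_of_nonneg (le_of_not_gt hn)]; ring
  set z : convSeqs := ∑ n ∈ S, s n • e n with hz
  have hznorm : ‖z‖ ≤ 1 := by
    have hcoe : ∀ m, ((z : BoundedContinuousFunction ℕ ℝ)) m = ∑ n ∈ S, s n * (if m = n then 1 else 0) := by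
      intro m
      rw [hz]
      push_cast
      simp [e, mk]
    have key : ∀ m, ‖(z : BoundedContinuousFunction ℕ ℝ) m‖ ≤ 1 := by
      intro m
      rw [Real.norm_eq_abs, hcoe m]
      by_cases hm : m ∈ S
      · rw [Finset.sum_eq_single m (fun n _ hn => by simp [Ne.symm hn]) (fun h => absurd hm h)]
        simp only [if_pos rfl, mul_one]
        by_cases h : f (e m) < 0 <;> simp [hs, h]
      · rw [Finset.sum_eq_zero (fun n hn => by rw [if_neg (fun h : m = n => hm (h ▸ hn)), mul_zero])]
        norm_num
    calc ‖z‖ = ‖(z : BoundedContinuousFunction ℕ ℝ)‖ := rfl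
      _ ≤ 1 := (BoundedContinuousFunction.norm_le zero_le_one).2 key
  calc ∑ n ∈ S, |f (e n)| = f z := by
        rw [hz, map_sum]
        exact Finset.sum_congr rfl fun n _ => by rw [map_smul, smul_eq_mul, hsa n]
      _ ≤ |f z| := le_abs_self _
      _ ≤ ‖f‖ * ‖z‖ := f.le_opNorm z
      _ ≤ ‖f‖ := by
        nlinarith [norm_nonneg f, norm_nonneg z]

theorem summable_abs (f : StrongDual ℝ convSeqs) : Summable (fun n => |f (e n)|) :=
  summable_of_sum_le (fun n => abs_nonneg _) (sum_abs_le f)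

theorem tsum_abs_le (f : StrongDual ℝ convSeqs) : ∑' n, |f (e n)| ≤ ‖f‖ :=
  Summable.tsum_le_of_sum_le (summable_abs f) (sum_abs_le f)

end ConvSeqsAux

namespace ConvSeqsAux

theorem summable_a (f : StrongDual ℝ convSeqs) : Summable (fun n => f (e n)) :=
  (summable_abs f).of_abs

theorem repr_eq (f : StrongDual ℝ convSeqs) (x : convSeqs) :
    f x = (f one - ∑' n, f (e n)) * cLim x
      + ∑' n, f (e n) * ((x : BoundedContinuousFunction ℕ ℝ) n) := by
  set a : ℕ → ℝ := fun n => f (e n) with ha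
  set y : convSeqs := x - cLim x • one with hy
  have hy_apply : ∀ n, ((y : BoundedContinuousFunction ℕ ℝ)) n
      = (x : BoundedContinuousFunction ℕ ℝ) n - cLim x := by
    intro n
    simp [hy, one, mk]
  have hy_lim : Tendsto (fun n => (y : BoundedContinuousFunction ℕ ℝ) n) atTop (nhds 0) := by
    simp only [hy_apply]
    simpa using (cLim_spec x).sub_const (cLim x)
  set p : ℕ → convSeqs := fun N => ∑ n ∈ Finset.range N, ((y : BoundedContinuousFunction ℕ ℝ) n) • e n with hp
  have hpz : ∀ N, f (p N) = ∑ n ∈ Finset.range N, a n * (y : BoundedContinuousFunction ℕ ℝ) n := by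
    intro N
    rw [hp, map_sum]
    exact Finset.sum_congr rfl fun n _ => by rw [map_smul, smul_eq_mul, ha]; ring
  -- p N → y in norm
  have hpy : Tendsto p atTop (nhds y) := by
    rw [Metric.tendsto_atTop]
    intro ε hε
    obtain ⟨N, hN⟩ := (Metric.tendsto_atTop.1 hy_lim) (ε/2) (by linarith)
    refine ⟨N, fun M hM => ?_⟩
    have hval : ∀ m, ((p M : BoundedContinuousFunction ℕ ℝ)) m
        = ∑ n ∈ Finset.range M, (y : BoundedContinuousFunction ℕ ℝ) n * (if m = n then 1 else 0) := by
      intro m; rw [hp]; push_cast; simp [e, mk]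
    have key : ∀ m, ‖((p M - y : convSeqs) : BoundedContinuousFunction ℕ ℝ) m‖ ≤ ε/2 := by
      intro m
      have hc : ((p M - y : convSeqs) : BoundedContinuousFunction ℕ ℝ) m
          = (p M : BoundedContinuousFunction ℕ ℝ) m - (y : BoundedContinuousFunction ℕ ℝ) m := by
        push_cast; simp
      rw [hc, hval m]
      by_cases hm : m ∈ Finset.range M
      · rw [Finset.sum_eq_single m (fun n _ hn => by simp [Ne.symm hn]) (fun h => absurd hm h)]
        simp only [if_pos rfl, if_true, mul_one, sub_self, norm_zero]
        linarith
      · rw [Finset.sum_eq_zero (fun n hn => by rw [if_neg (fun h : m = n => hm (h ▸ hn)), mul_zero])]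
        have hmN : N ≤ m := le_trans hM (le_of_not_gt (by simpa using hm))
        have h2 := hN m hmN
        rw [Real.dist_eq, sub_zero] at h2
        rw [zero_sub, norm_neg, Real.norm_eq_abs]
        linarith
    have hd : dist (p M) y = ‖((p M - y : convSeqs) : BoundedContinuousFunction ℕ ℝ)‖ := by
      rw [Subtype.dist_eq, dist_eq_norm]
      push_cast
      try ring
    rw [hd]
    calc ‖((p M - y : convSeqs) : BoundedContinuousFunction ℕ ℝ)‖
        ≤ ε/2 := (BoundedContinuousFunction.norm_le (by linarith)).2 key
      _ < ε := by linarith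
  have hfy : Tendsto (fun N => f (p N)) atTop (nhds (f y)) :=
    (f.continuous.tendsto y).comp hpy
  have hsum_y : Summable (fun n => a n * (y : BoundedContinuousFunction ℕ ℝ) n) := by
    refine Summable.of_norm_bounded ((summable_abs f).mul_right ‖y‖) fun n => ?_
    rw [Real.norm_eq_abs, abs_mul]
    exact mul_le_mul_of_nonneg_left (by simpa using (y : BoundedContinuousFunction ℕ ℝ).norm_coe_le_norm n) (abs_nonneg _)
  have htsum_y : ∑' n, a n * (y : BoundedContinuousFunction ℕ ℝ) n = f y := by
    have h1 := hsum_y.hasSum.tendsto_sum_nat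
    simp only [← hpz] at h1
    exact tendsto_nhds_unique h1 hfy
  -- now combine
  have hx : x = y + cLim x • one := by rw [hy]; abel
  have hfx : f x = f y + cLim x * f one := by
    conv_lhs => rw [hx]
    rw [map_add, map_smul, smul_eq_mul]
  have hxn : ∀ n, (x : BoundedContinuousFunction ℕ ℝ) n = (y : BoundedContinuousFunction ℕ ℝ) n + cLim x := by
    intro n; rw [hy_apply]; ring
  have hsplit : ∑' n, a n * (x : BoundedContinuousFunction ℕ ℝ) n
      = (∑' n, a n * (y : BoundedContinuousFunction ℕ ℝ) n) + (∑' n, a n) * cLim x := by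
    rw [← tsum_mul_right]
    rw [← Summable.tsum_add hsum_y ((summable_a f).mul_right (cLim x))]
    exact tsum_congr fun n => by rw [hxn n]; ring
  rw [hfx, hsplit, htsum_y]
  ring

end ConvSeqsAux

namespace ConvSeqsAux

theorem mem_closure_span (f : StrongDual ℝ convSeqs) :
    f ∈ closure ((Submodule.span ℝ (insert L (Set.range ev)) :
      Submodule ℝ (StrongDual ℝ convSeqs)) : Set (StrongDual ℝ convSeqs)) := by
  set a : ℕ → ℝ := fun n => f (e n) with ha
  set g : ℕ → StrongDual ℝ convSeqs :=
    fun N => (f one - ∑' n, a n) • L + ∑ n ∈ Finset.range N, a n • ev n with hg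
  have hg_mem : ∀ N, g N ∈ Submodule.span ℝ (insert L (Set.range ev)) := by
    intro N
    refine Submodule.add_mem _ (Submodule.smul_mem _ _ (Submodule.subset_span (Set.mem_insert _ _)))
      (Submodule.sum_mem _ fun n _ =>
        Submodule.smul_mem _ _ (Submodule.subset_span (Set.mem_insert_of_mem _ ⟨n, rfl⟩)))
  have habs : Summable (fun n => |a n|) := summable_abs f
  have hnorm : ∀ N, ‖f - g N‖ ≤ ∑' i, |a (i + N)| := by
    intro N
    refine ContinuousLinearMap.opNorm_le_bound _ (tsum_nonneg fun i => abs_nonneg _) fun x => ?_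
    have hsum_x : Summable (fun n => a n * (x : BoundedContinuousFunction ℕ ℝ) n) := by
      refine Summable.of_norm_bounded (habs.mul_right ‖x‖) fun n => ?_
      rw [Real.norm_eq_abs, abs_mul]
      exact mul_le_mul_of_nonneg_left
        (by simpa using (x : BoundedContinuousFunction ℕ ℝ).norm_coe_le_norm n) (abs_nonneg _)
    have hval : (f - g N) x = ∑' i, a (i + N) * (x : BoundedContinuousFunction ℕ ℝ) (i + N) := by
      have h1 : (f - g N) x = f x - g N x := rfl
      have h2 : g N x = (f one - ∑' n, a n) * cLim x
          + ∑ n ∈ Finset.range N, a n * (x : BoundedContinuousFunction ℕ ℝ) n := by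
        rw [hg]
        simp [ContinuousLinearMap.sum_apply, mul_comm]
      rw [h1, h2, repr_eq f x]
      have h3 := Summable.sum_add_tsum_nat_add (f := fun n => a n * (x : BoundedContinuousFunction ℕ ℝ) n) N hsum_x
      rw [ha] at h3 ⊢
      linarith [h3]
    rw [hval]
    have htail : Summable (fun i => |a (i + N)|) := by
      exact (summable_nat_add_iff N).2 habs
    calc ‖∑' i, a (i + N) * (x : BoundedContinuousFunction ℕ ℝ) (i + N)‖
        ≤ ∑' i, ‖a (i + N) * (x : BoundedContinuousFunction ℕ ℝ) (i + N)‖ := by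
          refine norm_tsum_le_tsum_norm ?_
          refine Summable.of_nonneg_of_le (fun i => norm_nonneg _) (fun i => ?_) (htail.mul_right ‖x‖)
          rw [Real.norm_eq_abs, abs_mul]
          exact mul_le_mul_of_nonneg_left
            (by simpa using (x : BoundedContinuousFunction ℕ ℝ).norm_coe_le_norm (i + N)) (abs_nonneg _)
      _ ≤ ∑' i, |a (i + N)| * ‖x‖ := by
          refine Summable.tsum_le_tsum (fun i => ?_) ?_ (htail.mul_right ‖x‖)
          · rw [Real.norm_eq_abs, abs_mul]
            exact mul_le_mul_of_nonneg_left
              (by simpa using (x : BoundedContinuousFunction ℕ ℝ).norm_coe_le_norm (i + N)) (abs_nonneg _)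
          · refine Summable.of_nonneg_of_le (fun i => norm_nonneg _) (fun i => ?_) (htail.mul_right ‖x‖)
            rw [Real.norm_eq_abs, abs_mul]
            exact mul_le_mul_of_nonneg_left
              (by simpa using (x : BoundedContinuousFunction ℕ ℝ).norm_coe_le_norm (i + N)) (abs_nonneg _)
      _ = (∑' i, |a (i + N)|) * ‖x‖ := tsum_mul_right
  have htail0 : Tendsto (fun N => ∑' i, |a (i + N)|) atTop (nhds 0) :=
    tendsto_sum_nat_add (fun n => |a n|)
  have hgf : Tendsto g atTop (nhds f) := by
    rw [tendsto_iff_norm_sub_tendsto_zero]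
    refine squeeze_zero (fun N => norm_nonneg _) (fun N => ?_) htail0
    rw [norm_sub_rev]
    exact hnorm N
  exact mem_closure_of_tendsto hgf (Eventually.of_forall hg_mem)

theorem dual_convSeqs_separable :
    TopologicalSpace.SeparableSpace (StrongDual ℝ convSeqs) := by
  rw [← TopologicalSpace.isSeparable_univ_iff]
  have hc : TopologicalSpace.IsSeparable
      ((Submodule.span ℝ (insert L (Set.range ev)) :
        Submodule ℝ (StrongDual ℝ convSeqs)) : Set (StrongDual ℝ convSeqs)) :=
    TopologicalSpace.IsSeparable.span (((Set.countable_range ev).insert L).isSeparable)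
  refine (TopologicalSpace.isSeparable_closure.2 hc).mono fun f _ => mem_closure_span f

end ConvSeqsAux


/-- Every Banach space which is almost isometric to a subspace of `c`
(for every `ε > 0` there is a linear `J_ε` into `c` with
`(1-ε)‖x‖ ≤ ‖J_ε x‖ ≤ ‖x‖`) has a separable dual. -/
theorem separable_dual_of_almost_isometric_into_c
    (X : Type*) [NormedAddCommGroup X] [NormedSpace ℝ X] [CompleteSpace X]
    (h : ∀ ε > (0:ℝ), ∃ J : X →ₗ[ℝ] convSeqs,
      ∀ x : X, (1 - ε) * ‖x‖ ≤ ‖J x‖ ∧ ‖J x‖ ≤ ‖x‖) :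
    TopologicalSpace.SeparableSpace (StrongDual ℝ X) := by
  classical
  obtain ⟨J, hJ⟩ := h (1/2) (by norm_num)
  have hub : ∀ x : X, ‖J x‖ ≤ ‖x‖ := fun x => (hJ x).2
  have hlb : ∀ x : X, ‖x‖ ≤ 2 * ‖J x‖ := fun x => by have := (hJ x).1; linarith
  have hinj : Function.Injective J := by
    intro u v huv
    have h1 : ‖u - v‖ ≤ 2 * ‖J (u - v)‖ := hlb _
    have h0 : J (u - v) = 0 := by rw [map_sub, huv, sub_self]
    rw [h0] at h1
    have hz : ‖(0 : convSeqs)‖ = 0 := by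
      calc ‖(0 : convSeqs)‖ = ‖((0 : convSeqs) : BoundedContinuousFunction ℕ ℝ)‖ := rfl
        _ = 0 := by norm_num
    rw [hz, mul_zero] at h1
    have h2 := norm_nonneg (u - v)
    have h3 : ‖u - v‖ = 0 := le_antisymm h1 h2
    rwa [norm_sub_eq_zero_iff] at h3
  have hJcb : ∀ x : X, ‖J x‖ ≤ 1 * ‖x‖ := fun x => by rw [one_mul]; exact hub x
  set Jc : X →L[ℝ] ↥convSeqs :=
    LinearMap.mkContinuous (𝕜 := ℝ) (𝕜₂ := ℝ) (E := X) (F := ↥convSeqs) J 1 hJcb with hJc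
  set T : StrongDual ℝ convSeqs → StrongDual ℝ X :=
    fun f => f.comp Jc with hT
  have hT_apply : ∀ (F : StrongDual ℝ convSeqs) (x : X), T F x = F (J x) := by
    intro F x; rfl
  have hTlip : LipschitzWith 1 T := by
    apply LipschitzWith.of_dist_le_mul
    intro f g
    rw [dist_eq_norm, dist_eq_norm, NNReal.coe_one, one_mul]
    have hsub : T f - T g = (f - g).comp Jc := by
      ext x
      simp [hT]
    rw [hsub]
    refine ContinuousLinearMap.opNorm_le_bound _ (norm_nonneg _) fun x => ?_
    have hJx : ‖Jc x‖ ≤ ‖x‖ := by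
      have : Jc x = J x := rfl
      rw [this]; exact hub x
    calc ‖((f - g).comp Jc) x‖ = ‖(f - g) (Jc x)‖ := rfl
      _ ≤ ‖f - g‖ * ‖Jc x‖ := (f - g).le_opNorm _
      _ ≤ ‖f - g‖ * ‖x‖ := mul_le_mul_of_nonneg_left hJx (norm_nonneg _)
  have hTsurj : Function.Surjective T := by
    intro g
    set Jb : X →ₗ[ℝ] BoundedContinuousFunction ℕ ℝ := convSeqs.subtype ∘ₗ J with hJb
    have hJb_apply : ∀ x : X, Jb x = (J x : BoundedContinuousFunction ℕ ℝ) := fun x => rfl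
    have hJb_norm : ∀ x : X, ‖Jb x‖ = ‖J x‖ := fun x => rfl
    have hJb_inj : Function.Injective Jb := by
      intro u v huv
      apply hinj
      apply Subtype.ext
      rw [← hJb_apply u, ← hJb_apply v, huv]
    set p : Submodule ℝ (BoundedContinuousFunction ℕ ℝ) := LinearMap.range Jb with hp
    set eqv : X ≃ₗ[ℝ] p := LinearEquiv.ofInjective Jb hJb_inj with heqv
    set φ : p →ₗ[ℝ] ℝ := (g : X →ₗ[ℝ] ℝ).comp (eqv.symm : p →ₗ[ℝ] X) with hφdef
    have hφ : ∀ y : p, ‖φ y‖ ≤ (2 * ‖g‖) * ‖y‖ := by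
      intro y
      set x := eqv.symm y with hx
      have hxy : Jb x = (y : BoundedContinuousFunction ℕ ℝ) := by
        have h1 : eqv x = y := eqv.apply_symm_apply y
        have h2 : (eqv x : BoundedContinuousFunction ℕ ℝ) = Jb x := by
          rw [heqv]; exact LinearEquiv.ofInjective_apply (h := hJb_inj) Jb x
        rw [← h2, h1]
      have h1 : φ y = g x := rfl
      have h2 : ‖g x‖ ≤ ‖g‖ * ‖x‖ := g.le_opNorm x
      have h3 : ‖x‖ ≤ 2 * ‖Jb x‖ := by rw [hJb_norm]; exact hlb x
      have h4 : ‖(y : BoundedContinuousFunction ℕ ℝ)‖ = ‖y‖ := rfl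
      rw [h1]
      rw [hxy, h4] at h3
      calc ‖g x‖ ≤ ‖g‖ * ‖x‖ := h2
        _ ≤ ‖g‖ * (2 * ‖y‖) := mul_le_mul_of_nonneg_left h3 (norm_nonneg g)
        _ = (2 * ‖g‖) * ‖y‖ := by ring
    set φc : p →L[ℝ] ℝ := LinearMap.mkContinuous (𝕜 := ℝ) (𝕜₂ := ℝ) (E := ↥p) (F := ℝ) φ (2 * ‖g‖) hφ with hφc
    obtain ⟨F, hFext, -⟩ := exists_extension_norm_eq p φc
    refine ⟨F.comp convSeqs.subtypeL, ?_⟩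
    ext x
    have hmem : Jb x ∈ p := LinearMap.mem_range_self Jb x
    have h5 : T (F.comp convSeqs.subtypeL) x = F (Jb x) := rfl
    have h6 : F (Jb x) = φc ⟨Jb x, hmem⟩ := hFext ⟨Jb x, hmem⟩
    have h7 : φc ⟨Jb x, hmem⟩ = g (eqv.symm ⟨Jb x, hmem⟩) := rfl
    have h8 : (⟨Jb x, hmem⟩ : p) = eqv x := by
      apply Subtype.ext
      rw [heqv]
      exact (LinearEquiv.ofInjective_apply (h := hJb_inj) Jb x).symm
    rw [h5, h6, h7, h8, eqv.symm_apply_apply]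
  haveI := ConvSeqsAux.dual_convSeqs_separable
  exact hTsurj.denseRange.separableSpace hTlip.continuous
end

section
/- A Banach space X fails LOH (is not locally octahedral) if and only if there exist x ∈ S_X and ε > 0 such that the slice S(x, ε) = {x* ∈ B_{X*} : x*(x) > 1 − ε} has diameter strictly less than 2. -/
open Metric NormedSpace

private lemma dual_abs_le {X : Type*} [NormedAddCommGroup X] [NormedSpace ℝ X]
    (φ : StrongDual ℝ X) (h : ‖φ‖ ≤ 1) (z : X) : |φ z| ≤ ‖z‖ := by
  have h1 : ‖φ z‖ ≤ ‖φ‖ * ‖z‖ := φ.le_opNorm z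
  rw [Real.norm_eq_abs] at h1
  nlinarith [norm_nonneg z, abs_nonneg (φ z)]

/-- A Banach space `X` fails to be locally octahedral if and only if some weak*
slice `S(x, ε) = {x* ∈ B_{X*} : x*(x) > 1 − ε}` of the dual unit ball, determined
by an `x` in the unit sphere of `X`, has diameter strictly less than `2`. -/
theorem not_LOH_iff_small_dual_slice
    (X : Type*) [NormedAddCommGroup X] [NormedSpace ℝ X] [CompleteSpace X] :
    (¬ ∀ x : X, ‖x‖ = 1 → ∀ ε > (0:ℝ), ∃ y : X, ‖y‖ = 1 ∧
        2 - ε < ‖x + y‖ ∧ 2 - ε < ‖x - y‖) ↔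
      ∃ x : X, ‖x‖ = 1 ∧ ∃ ε > (0:ℝ),
        Metric.diam {φ : StrongDual ℝ X | ‖φ‖ ≤ 1 ∧ 1 - ε < φ x} < 2 := by
  constructor
  · intro h
    push_neg at h
    obtain ⟨x, hx, ε, hε, h⟩ := h
    have hε2 : ε ≤ 2 := by
      have hx2 : ‖x + x‖ = 2 := by
        have h2 : x + x = (2:ℝ) • x := (two_smul ℝ x).symm
        rw [h2, norm_smul, hx]; norm_num
      have hh := h x hx
      rw [hx2, sub_self, norm_zero] at hh
      by_contra hc
      push_neg at hc
      have := hh (by linarith)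
      linarith
    refine ⟨x, hx, ε/2, by linarith, ?_⟩
    have hbound : ∀ φ ∈ {φ : StrongDual ℝ X | ‖φ‖ ≤ 1 ∧ 1 - ε/2 < φ x},
        ∀ ψ ∈ {φ : StrongDual ℝ X | ‖φ‖ ≤ 1 ∧ 1 - ε/2 < φ x}, dist φ ψ ≤ 2 - ε/2 := by
      rintro φ ⟨hφ1, hφ2⟩ ψ ⟨hψ1, hψ2⟩
      rw [dist_eq_norm]
      refine ContinuousLinearMap.opNorm_le_bound _ (by linarith) fun y => ?_
      rcases eq_or_ne y 0 with rfl | hy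
      · simp
      · have hyn : (0:ℝ) < ‖y‖ := norm_pos_iff.mpr hy
        set u := ‖y‖⁻¹ • y with hu
        have hun : ‖u‖ = 1 := by
          rw [hu, norm_smul, norm_inv, norm_norm, inv_mul_cancel₀ hyn.ne']
        have bφ : ∀ z : X, |φ z| ≤ ‖z‖ := dual_abs_le φ hφ1
        have bψ : ∀ z : X, |ψ z| ≤ ‖z‖ := dual_abs_le ψ hψ1
        have key : |φ u - ψ u| ≤ 2 - ε/2 := by
          rcases le_or_gt ‖x + u‖ (2 - ε) with hcase | hcase
          · have h1 : φ x + φ u ≤ 2 - ε := by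
              have := (abs_le.mp (bφ (x + u))).2
              rw [map_add] at this; linarith
            have h2 : ψ x + ψ u ≤ 2 - ε := by
              have := (abs_le.mp (bψ (x + u))).2
              rw [map_add] at this; linarith
            have h3 : -1 ≤ φ u := by
              have := (abs_le.mp (bφ u)).1; rw [hun] at this; linarith
            have h4 : -1 ≤ ψ u := by
              have := (abs_le.mp (bψ u)).1; rw [hun] at this; linarith
            rw [abs_le]; constructor <;> nlinarith
          · have hle : ‖x - u‖ ≤ 2 - ε := h u hun hcase
            have h1 : φ x - φ u ≤ 2 - ε := by
              have := (abs_le.mp (bφ (x - u))).2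
              rw [map_sub] at this; linarith
            have h2 : ψ x - ψ u ≤ 2 - ε := by
              have := (abs_le.mp (bψ (x - u))).2
              rw [map_sub] at this; linarith
            have h3 : φ u ≤ 1 := by
              have := (abs_le.mp (bφ u)).2; rw [hun] at this; linarith
            have h4 : ψ u ≤ 1 := by
              have := (abs_le.mp (bψ u)).2; rw [hun] at this; linarith
            rw [abs_le]; constructor <;> nlinarith
        have hyu : y = ‖y‖ • u := by
          rw [hu, smul_smul, mul_inv_cancel₀ hyn.ne', one_smul]
        have heq : ‖(φ - ψ) y‖ = ‖y‖ * |φ u - ψ u| := by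
          conv_lhs => rw [hyu]
          rw [map_smul, smul_eq_mul, Real.norm_eq_abs, abs_mul, abs_of_pos hyn,
            ContinuousLinearMap.sub_apply]
        rw [heq, mul_comm]
        exact mul_le_mul_of_nonneg_right key hyn.le
    calc Metric.diam {φ : StrongDual ℝ X | ‖φ‖ ≤ 1 ∧ 1 - ε/2 < φ x} ≤ 2 - ε/2 :=
          Metric.diam_le_of_forall_dist_le (by linarith) hbound
      _ < 2 := by linarith
  · rintro ⟨x, hx, ε, hε, hdiam⟩
    intro hLOH
    set s := {φ : StrongDual ℝ X | ‖φ‖ ≤ 1 ∧ 1 - ε < φ x} with hs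
    have hd0 : 0 ≤ Metric.diam s := Metric.diam_nonneg
    set δ := 2 - Metric.diam s with hδdef
    have hδ : 0 < δ := by simp only [hδdef]; linarith
    set ε' := min ε (δ/4) with hε'
    have hε'pos : 0 < ε' := lt_min hε (by linarith)
    have hε'ε : ε' ≤ ε := min_le_left _ _
    have hε'δ : ε' ≤ δ/4 := min_le_right _ _
    have hδ2 : δ ≤ 2 := by simp only [hδdef]; linarith
    obtain ⟨y, hy, hpy, hmy⟩ := hLOH x hx ε' hε'pos
    have hxy : x + y ≠ 0 := by
      intro hc; rw [hc, norm_zero] at hpy; linarith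
    have hxy' : x - y ≠ 0 := by
      intro hc; rw [hc, norm_zero] at hmy; linarith
    obtain ⟨φ, hφn, hφx⟩ := exists_dual_vector ℝ (x + y) (norm_ne_zero_iff.mpr hxy)
    obtain ⟨ψ, hψn, hψx⟩ := exists_dual_vector ℝ (x - y) (norm_ne_zero_iff.mpr hxy')
    have hφx' : φ (x + y) = ‖x + y‖ := by exact_mod_cast hφx
    have hψx' : ψ (x - y) = ‖x - y‖ := by exact_mod_cast hψx
    have bφ : ∀ z : X, |φ z| ≤ ‖z‖ := dual_abs_le φ hφn.le
    have bψ : ∀ z : X, |ψ z| ≤ ‖z‖ := dual_abs_le ψ hψn.le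
    have hφadd : φ x + φ y = ‖x + y‖ := by rw [← map_add, hφx']
    have hψsub : ψ x - ψ y = ‖x - y‖ := by rw [← map_sub, hψx']
    have hφy1 : |φ y| ≤ 1 := by have := bφ y; rwa [hy] at this
    have hφx1 : |φ x| ≤ 1 := by have := bφ x; rwa [hx] at this
    have hψy1 : |ψ y| ≤ 1 := by have := bψ y; rwa [hy] at this
    have hψx1 : |ψ x| ≤ 1 := by have := bψ x; rwa [hx] at this
    have hφmem : φ ∈ s := by
      refine ⟨hφn.le, ?_⟩
      have := (abs_le.mp hφy1).2
      linarith
    have hψmem : ψ ∈ s := by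
      refine ⟨hψn.le, ?_⟩
      have := (abs_le.mp hψy1).1
      linarith
    have hsub : s ⊆ Metric.closedBall 0 1 := by
      intro g hg
      rw [Metric.mem_closedBall, dist_zero_right]
      exact hg.1
    have hbdd : Bornology.IsBounded s :=
      (Metric.isBounded_closedBall (x := (0 : StrongDual ℝ X)) (r := 1)).subset hsub
    have hdist : dist φ ψ ≤ Metric.diam s :=
      Metric.dist_le_diam_of_mem hbdd hφmem hψmem
    have hlow : φ y - ψ y ≤ dist φ ψ := by
      rw [dist_eq_norm]
      have h1 : (φ - ψ) y ≤ ‖(φ - ψ) y‖ := le_abs_self _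
      have h2 : ‖(φ - ψ) y‖ ≤ ‖φ - ψ‖ * ‖y‖ := (φ - ψ).le_opNorm y
      rw [hy, mul_one] at h2
      rw [ContinuousLinearMap.sub_apply] at h1 h2
      linarith
    have hφygt : 1 - ε' < φ y := by
      have := (abs_le.mp hφx1).2
      linarith
    have hψylt : ψ y < ε' - 1 := by
      have := (abs_le.mp hψx1).2
      linarith
    have : Metric.diam s = 2 - δ := by simp only [hδdef]; ring
    linarith
end

section
/- If X is a Banach space and Y ⊆ X is a closed subspace of finite codimension that is not almost square, then X is not almost square. -/
open Filter
set_option maxHeartbeats 1000000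

/-- A normed space `E` is almost square (ASQ). -/
def IsASQ (E : Type*) [NormedAddCommGroup E] : Prop :=
  ∀ (k : ℕ) (x : Fin k → E), (∀ i, ‖x i‖ = 1) →
    ∃ y : ℕ → E, (∀ n, ‖y n‖ ≤ 1) ∧
      Tendsto (fun n => ‖y n‖) atTop (nhds 1) ∧
      ∀ i, Tendsto (fun n => ‖x i + y n‖) atTop (nhds 1) ∧
           Tendsto (fun n => ‖x i - y n‖) atTop (nhds 1)

section Aux

variable {X : Type*} [NormedAddCommGroup X] [NormedSpace ℝ X]

set_option linter.unusedSectionVars false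

/-- Finite approximate version of ASQ, for lists of unit vectors. -/
lemma asq_list (hX : IsASQ X) (L : List X) (hL : ∀ u ∈ L, ‖u‖ = 1)
    {ε : ℝ} (hε : 0 < ε) :
    ∃ y : X, ‖y‖ ≤ 1 ∧ 1 - ε ≤ ‖y‖ ∧
      ∀ u ∈ L, ‖u + y‖ ≤ 1 + ε ∧ 1 - ε ≤ ‖u + y‖ ∧ ‖u - y‖ ≤ 1 + ε ∧ 1 - ε ≤ ‖u - y‖ := by
  obtain ⟨y, hy1, hy2, hy3⟩ := hX L.length L.get (fun i => hL _ (L.get_mem i))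
  have h1 : ∀ᶠ n in atTop, 1 - ε < ‖y n‖ := hy2.eventually_const_lt (by linarith)
  have h2 : ∀ᶠ n in atTop, ∀ i : Fin L.length,
      ‖L.get i + y n‖ < 1 + ε ∧ 1 - ε < ‖L.get i + y n‖ ∧
      ‖L.get i - y n‖ < 1 + ε ∧ 1 - ε < ‖L.get i - y n‖ := by
    refine eventually_all.2 fun i => ?_
    exact ((hy3 i).1.eventually_lt_const (by linarith)).and
      (((hy3 i).1.eventually_const_lt (by linarith)).and
        (((hy3 i).2.eventually_lt_const (by linarith)).and
          ((hy3 i).2.eventually_const_lt (by linarith))))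
  obtain ⟨n, hn1, hn2⟩ := (h1.and h2).exists
  refine ⟨y n, hy1 n, hn1.le, fun u hu => ?_⟩
  obtain ⟨i, rfl⟩ := List.mem_iff_get.1 hu
  exact ⟨(hn2 i).1.le, (hn2 i).2.1.le, (hn2 i).2.2.1.le, (hn2 i).2.2.2.le⟩

/-- Approximate version of ASQ for lists of almost-unit vectors. -/
lemma asq_list' (hX : IsASQ X) (L : List X)
    {ε : ℝ} (hε : 0 < ε) (hε1 : ε < 1)
    (hL : ∀ u ∈ L, 1 - ε ≤ ‖u‖ ∧ ‖u‖ ≤ 1 + ε) :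
    ∃ y : X, ‖y‖ ≤ 1 ∧ 1 - ε ≤ ‖y‖ ∧
      ∀ u ∈ L,
        (‖u + y‖ ≤ ‖u‖ * (1 + ε) + |1 - ‖u‖| ∧ ‖u‖ * (1 - ε) - |1 - ‖u‖| ≤ ‖u + y‖) ∧
        (‖u - y‖ ≤ ‖u‖ * (1 + ε) + |1 - ‖u‖| ∧ ‖u‖ * (1 - ε) - |1 - ‖u‖| ≤ ‖u - y‖) := by
  have hne : ∀ u ∈ L, u ≠ 0 := by
    intro u hu h0
    have := (hL u hu).1
    rw [h0, norm_zero] at this; linarith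
  obtain ⟨y, hy1, hy2, hy3⟩ := asq_list hX (L.map fun u => ‖u‖⁻¹ • u)
    (by
      intro v hv
      obtain ⟨u, hu, rfl⟩ := List.mem_map.1 hv
      exact norm_smul_inv_norm (𝕜 := ℝ) (hne u hu)) hε
  refine ⟨y, hy1, hy2, fun u hu => ?_⟩
  set r := ‖u‖ with hr
  have hr0 : 0 < r := by have := (hL u hu).1; linarith
  have hv : ‖u‖⁻¹ • u ∈ L.map fun u => ‖u‖⁻¹ • u := List.mem_map.2 ⟨u, hu, rfl⟩
  obtain ⟨hv1, hv2, hv3, hv4⟩ := hy3 _ hv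
  have key : ∀ s : ℝ, s = 1 ∨ s = -1 →
      ‖u + s • y‖ ≤ r * (1 + ε) + |1 - r| ∧ r * (1 - ε) - |1 - r| ≤ ‖u + s • y‖ := by
    intro s hs
    have hsy : ‖s • y‖ ≤ 1 := by
      rcases hs with rfl | rfl <;> simpa using hy1
    have hvy1 : ‖‖u‖⁻¹ • u + s • y‖ ≤ 1 + ε := by
      rcases hs with rfl | rfl
      · simpa using hv1
      · simpa [sub_eq_add_neg] using hv3
    have hvy2 : 1 - ε ≤ ‖‖u‖⁻¹ • u + s • y‖ := by
      rcases hs with rfl | rfl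
      · simpa using hv2
      · simpa [sub_eq_add_neg] using hv4
    have hdecomp : u + s • y = r • (‖u‖⁻¹ • u + s • y) + (1 - r) • (s • y) := by
      rw [smul_add, smul_smul, mul_inv_cancel₀ (ne_of_gt hr0)]
      module
    constructor
    · calc ‖u + s • y‖ ≤ ‖r • (‖u‖⁻¹ • u + s • y)‖ + ‖(1 - r) • (s • y)‖ := by
            rw [hdecomp]; exact norm_add_le _ _
        _ ≤ r * (1 + ε) + |1 - r| * 1 := by
            rw [norm_smul, norm_smul, Real.norm_eq_abs, Real.norm_eq_abs,
              abs_of_pos hr0]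
            gcongr
        _ = r * (1 + ε) + |1 - r| := by ring
    · have h1 : r * (1 - ε) ≤ ‖r • (‖u‖⁻¹ • u + s • y)‖ := by
        rw [norm_smul, Real.norm_eq_abs, abs_of_pos hr0]
        exact mul_le_mul_of_nonneg_left hvy2 hr0.le
      have h2 : ‖r • (‖u‖⁻¹ • u + s • y)‖ ≤ ‖u + s • y‖ + |1 - r| * 1 := by
        have heq : r • (‖u‖⁻¹ • u + s • y) = (u + s • y) - (1 - r) • (s • y) := by
          rw [hdecomp]; abel
        rw [heq]
        calc ‖(u + s • y) - (1 - r) • (s • y)‖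
            ≤ ‖u + s • y‖ + ‖(1 - r) • (s • y)‖ := norm_sub_le _ _
          _ ≤ ‖u + s • y‖ + |1 - r| * 1 := by
              rw [norm_smul, Real.norm_eq_abs]; gcongr
      linarith
  constructor
  · simpa using key 1 (Or.inl rfl)
  · have := key (-1) (Or.inr rfl)
    simpa [sub_eq_add_neg] using this

/-- Core lemma: from ASQ of `X` one can find, for every finite family of unit vectors
and every `ε`, an almost-unit vector in `Y` that is almost orthogonal (in the square
sense) to the family. -/
lemma asq_core (Y : Submodule ℝ X) (hYc : IsClosed (Y : Set X))
    (hcodim : FiniteDimensional ℝ (X ⧸ Y))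
    (hX : IsASQ X) {k : ℕ} (x : Fin k → X) (hx : ∀ i, ‖x i‖ = 1)
    {ε : ℝ} (hε : 0 < ε) (hε1 : ε < 1) :
    ∃ w : X, w ∈ Y ∧ ‖w‖ ≤ 1 ∧ 1 - 9*ε ≤ ‖w‖ ∧
      ∀ i, ‖x i + w‖ ≤ 1 + 9*ε ∧ 1 - 9*ε ≤ ‖x i + w‖ ∧
           ‖x i - w‖ ≤ 1 + 9*ε ∧ 1 - 9*ε ≤ ‖x i - w‖ := by
  set good : X → Prop := fun u => ‖u‖ ≤ 1 ∧ 1 - ε ≤ ‖u‖ ∧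
      ∀ i, ‖x i + u‖ ≤ 1 + ε ∧ 1 - ε ≤ ‖x i + u‖ ∧
           ‖x i - u‖ ≤ 1 + ε ∧ 1 - ε ≤ ‖x i - u‖ with hgooddef
  set R : X → X → Prop := fun v u => 1 - 3*ε ≤ ‖u - v‖ ∧ ‖u - v‖ ≤ 1 + ε ∧
      ∀ i, ‖x i + (u - v)‖ ≤ 1 + 4*ε ∧ ‖x i - (u - v)‖ ≤ 1 + 4*ε with hRdef
  -- the extension step
  have step : ∀ l : List X, (∀ u ∈ l, good u) → ∃ v, good v ∧ ∀ u ∈ l, R v u := by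
    intro l hl
    set L : List X := (List.ofFn x) ++ l.flatMap (fun u =>
        u :: (List.ofFn (fun i => x i + u) ++ List.ofFn (fun i => x i - u))) with hLdef
    have hmemx : ∀ i, x i ∈ L := fun i =>
      List.mem_append_left _ (List.mem_ofFn.2 ⟨i, rfl⟩)
    have hmemu : ∀ u ∈ l, u ∈ L := fun u hu =>
      List.mem_append_right _ (List.mem_flatMap.2 ⟨u, hu, List.mem_cons_self⟩)
    have hmemp : ∀ i, ∀ u ∈ l, x i + u ∈ L := fun i u hu =>
      List.mem_append_right _ (List.mem_flatMap.2 ⟨u, hu, List.mem_cons_of_mem _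
        (List.mem_append_left _ (List.mem_ofFn.2 ⟨i, rfl⟩))⟩)
    have hmemm : ∀ i, ∀ u ∈ l, x i - u ∈ L := fun i u hu =>
      List.mem_append_right _ (List.mem_flatMap.2 ⟨u, hu, List.mem_cons_of_mem _
        (List.mem_append_right _ (List.mem_ofFn.2 ⟨i, rfl⟩))⟩)
    have hLbdd : ∀ u ∈ L, 1 - ε ≤ ‖u‖ ∧ ‖u‖ ≤ 1 + ε := by
      intro u hu
      rw [hLdef, List.mem_append] at hu
      rcases hu with hu | hu
      · obtain ⟨i, rfl⟩ := List.mem_ofFn.1 hu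
        rw [hx i]; constructor <;> linarith
      · obtain ⟨v, hv, hu⟩ := List.mem_flatMap.1 hu
        obtain ⟨hv1, hv2, hv3⟩ := hl v hv
        rcases List.mem_cons.1 hu with rfl | hu
        · exact ⟨hv2, by linarith⟩
        · rcases List.mem_append.1 hu with hu | hu
          · obtain ⟨i, rfl⟩ := List.mem_ofFn.1 hu
            exact ⟨(hv3 i).2.1, (hv3 i).1⟩
          · obtain ⟨i, rfl⟩ := List.mem_ofFn.1 hu
            exact ⟨(hv3 i).2.2.2, (hv3 i).2.2.1⟩
    obtain ⟨y, hy1, hy2, hy3⟩ := asq_list' hX L hε hε1 hLbdd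
    have hxbd : ∀ i, (‖x i + y‖ ≤ 1 + ε ∧ 1 - ε ≤ ‖x i + y‖ ∧
        ‖x i - y‖ ≤ 1 + ε ∧ 1 - ε ≤ ‖x i - y‖) := by
      intro i
      have := hy3 (x i) (hmemx i)
      rw [hx i] at this
      simp only [sub_self, abs_zero, one_mul] at this
      exact ⟨by linarith [this.1.1], by linarith [this.1.2],
             by linarith [this.2.1], by linarith [this.2.2]⟩
    refine ⟨y, ⟨hy1, hy2, fun i => hxbd i⟩, ?_⟩
    intro u hu
    obtain ⟨hu1, hu2, hu3⟩ := hl u hu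
    have hub := hy3 u (hmemu u hu)
    have habs : |1 - ‖u‖| = 1 - ‖u‖ := abs_of_nonneg (by linarith)
    rw [habs] at hub
    refine ⟨by nlinarith [hub.2.2], by nlinarith [hub.2.1], fun i => ?_⟩
    constructor
    · have h1 := (hy3 (x i + u) (hmemp i u hu)).2.1
      have hb1 : 1 - ε ≤ ‖x i + u‖ := (hu3 i).2.1
      have hb2 : ‖x i + u‖ ≤ 1 + ε := (hu3 i).1
      have habs2 : |1 - ‖x i + u‖| ≤ ε := abs_le.2 ⟨by linarith, by linarith⟩
      have heq : x i + (u - y) = (x i + u) - y := by abel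
      rw [heq]
      nlinarith [h1, habs2, abs_nonneg (1 - ‖x i + u‖)]
    · have h1 := (hy3 (x i - u) (hmemm i u hu)).1.1
      have hb1 : 1 - ε ≤ ‖x i - u‖ := (hu3 i).2.2.2
      have hb2 : ‖x i - u‖ ≤ 1 + ε := (hu3 i).2.2.1
      have habs2 : |1 - ‖x i - u‖| ≤ ε := abs_le.2 ⟨by linarith, by linarith⟩
      have heq : x i - (u - y) = (x i - u) + y := by abel
      rw [heq]
      nlinarith [h1, habs2, abs_nonneg (1 - ‖x i - u‖)]
  -- build a sequence by recursion
  set P : List X → Prop := fun l => (∀ u ∈ l, good u) ∧ l.Pairwise R with hPdef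
  have hstep : ∀ p : {l : List X // P l}, ∃ v, P (v :: p.1) := by
    rintro ⟨l, hl1, hl2⟩
    obtain ⟨v, hv1, hv2⟩ := step l hl1
    exact ⟨v, fun u hu => (List.mem_cons.1 hu).elim (fun h => h ▸ hv1) (hl1 u),
      List.pairwise_cons.2 ⟨hv2, hl2⟩⟩
  let next : {l : List X // P l} → {l : List X // P l} :=
    fun p => ⟨Classical.choose (hstep p) :: p.1, Classical.choose_spec (hstep p)⟩
  let Lc : ℕ → {l : List X // P l} :=
    fun n => next^[n] ⟨[], ⟨by simp, List.Pairwise.nil⟩⟩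
  let y : ℕ → X := fun n => Classical.choose (hstep (Lc n))
  have hcons : ∀ n, (Lc (n+1)).1 = y n :: (Lc n).1 := by
    intro n
    have h : Lc (n+1) = next (Lc n) := Function.iterate_succ_apply' next n _
    rw [h]
  have hsuf : ∀ n m, n ≤ m → (Lc n).1 <:+ (Lc m).1 := by
    intro n m h
    induction m, h using Nat.le_induction with
    | base => exact List.suffix_refl _
    | succ m hm ih => exact ih.trans (by rw [hcons m]; exact List.suffix_cons _ _)
  have hmem : ∀ {n m : ℕ}, n < m → y n ∈ (Lc m).1 := by
    intro n m h
    have h1 : y n ∈ (Lc (n+1)).1 := by rw [hcons n]; exact List.mem_cons_self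
    exact (hsuf _ _ h).subset h1
  have hgood : ∀ n, good (y n) := fun n =>
    ((Lc (n+1)).2.1) _ (by rw [hcons n]; exact List.mem_cons_self)
  have hR : ∀ {n m : ℕ}, n < m → R (y m) (y n) := by
    intro n m h
    have hp : ((Lc (m+1)).1).Pairwise R := (Lc (m+1)).2.2
    rw [hcons m] at hp
    exact (List.pairwise_cons.1 hp).1 _ (hmem h)
  -- compactness in the quotient
  haveI : IsClosed (Y : Set X) := hYc
  have hqb : ∀ n, (Submodule.Quotient.mk (y n) : X ⧸ Y) ∈ Metric.closedBall (0 : X ⧸ Y) 1 := by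
    intro n
    rw [Metric.mem_closedBall, dist_zero_right]
    exact (Submodule.Quotient.norm_mk_le _ _).trans (hgood n).1
  obtain ⟨a, -, φ, hφ, hconv⟩ :=
    tendsto_subseq_of_bounded Metric.isBounded_closedBall hqb
  obtain ⟨N, hN⟩ := Metric.tendsto_atTop.1 hconv (ε/2) (by linarith)
  set n := φ N with hn
  set m := φ (N+1) with hm
  have hnm : n < m := hφ (Nat.lt_succ_self N)
  set z := y n - y m with hz
  have hqz : ‖(Submodule.Quotient.mk z : X ⧸ Y)‖ < ε := by
    have heq : (Submodule.Quotient.mk z : X ⧸ Y) =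
        (Submodule.Quotient.mk (y n) : X ⧸ Y) - Submodule.Quotient.mk (y m) :=
      Submodule.Quotient.mk_sub Y
    rw [heq, ← dist_eq_norm]
    calc dist (Submodule.Quotient.mk (y n) : X ⧸ Y) (Submodule.Quotient.mk (y m))
        ≤ dist (Submodule.Quotient.mk (y n) : X ⧸ Y) a
          + dist a (Submodule.Quotient.mk (y m) : X ⧸ Y) := dist_triangle _ _ _
      _ < ε/2 + ε/2 := by
          have h1 := hN N le_rfl
          have h2 := hN (N+1) (Nat.le_succ N)
          simp only [Function.comp_apply] at h1 h2
          rw [dist_comm] at h2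
          exact add_lt_add h1 h2
      _ = ε := by ring
  obtain ⟨m', hm'1, hm'2⟩ := Submodule.Quotient.norm_mk_lt
    (Submodule.Quotient.mk z : X ⧸ Y) hε
  have hwY : z - m' ∈ Y := by
    have h := (Submodule.Quotient.eq Y).1 hm'1
    simpa using Y.neg_mem h
  set w := z - m' with hw
  have hzw : ‖z - w‖ < 2*ε := by
    have : z - w = m' := by rw [hw]; abel
    rw [this]
    calc ‖m'‖ < ‖(Submodule.Quotient.mk z : X ⧸ Y)‖ + ε := hm'2
      _ < ε + ε := by linarith
      _ = 2*ε := by ring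
  -- bounds on z
  obtain ⟨hz1, hz2, hz3⟩ := hR hnm
  have hzlow : ∀ i, 1 - 4*ε ≤ ‖x i + z‖ ∧ 1 - 4*ε ≤ ‖x i - z‖ := by
    intro i
    have h2 : (2:ℝ) ≤ ‖x i + z‖ + ‖x i - z‖ := by
      have heq : (x i + z) + (x i - z) = (2:ℝ) • x i := by module
      have := norm_add_le (x i + z) (x i - z)
      rw [heq, norm_smul, hx i] at this
      simpa using this
    exact ⟨by linarith [(hz3 i).2], by linarith [(hz3 i).1]⟩
  -- rescale w
  set c : ℝ := max ‖w‖ 1 with hc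
  have hc1 : 1 ≤ c := le_max_right _ _
  have hc0 : 0 < c := by linarith
  set w' := c⁻¹ • w with hw'
  have hw'Y : w' ∈ Y := Y.smul_mem _ hwY
  have hw'le : ‖w'‖ ≤ 1 := by
    rw [hw', norm_smul, Real.norm_eq_abs, abs_of_pos (inv_pos.2 hc0)]
    calc c⁻¹ * ‖w‖ ≤ c⁻¹ * c := by
          exact mul_le_mul_of_nonneg_left (le_max_left _ _) (inv_pos.2 hc0).le
      _ = 1 := inv_mul_cancel₀ (ne_of_gt hc0)
  have hwn : ‖w‖ ≤ 1 + 3*ε := by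
    have h2 : ‖w‖ ≤ ‖z‖ + ‖w - z‖ := by
      calc ‖w‖ = ‖z + (w - z)‖ := by rw [add_sub_cancel]
        _ ≤ ‖z‖ + ‖w - z‖ := norm_add_le _ _
    have h3 : ‖w - z‖ < 2*ε := by rw [norm_sub_rev]; exact hzw
    linarith [hz2]
  have hcle : c ≤ 1 + 3*ε := max_le hwn (by linarith)
  have hw'w : ‖w' - w‖ ≤ c - 1 := by
    have heq : w' - w = (c⁻¹ - 1) • w := by rw [hw', sub_smul, one_smul]
    rw [heq, norm_smul, Real.norm_eq_abs]
    have hcinv : c⁻¹ ≤ 1 := by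
      rw [inv_le_one_iff₀]; right; exact hc1
    have habs : |c⁻¹ - 1| = 1 - c⁻¹ := by
      rw [abs_of_nonpos (by linarith)]; ring
    rw [habs]
    have hwc : ‖w‖ ≤ c := le_max_left _ _
    have hci : c * c⁻¹ = 1 := mul_inv_cancel₀ (ne_of_gt hc0)
    nlinarith [norm_nonneg w, inv_pos.2 hc0]
  have hw'z : ‖w' - z‖ ≤ 5*ε := by
    calc ‖w' - z‖ ≤ ‖w' - w‖ + ‖w - z‖ := by
          have : w' - z = (w' - w) + (w - z) := by abel
          rw [this]; exact norm_add_le _ _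
      _ ≤ (c - 1) + 2*ε := by
          have := hzw; rw [norm_sub_rev z w] at this; linarith
      _ ≤ 5*ε := by linarith
  refine ⟨w', hw'Y, hw'le, ?_, ?_⟩
  · have h3 : ‖z‖ - ‖w'‖ ≤ 5*ε := by
      calc ‖z‖ - ‖w'‖ ≤ ‖z - w'‖ := norm_sub_norm_le _ _
        _ = ‖w' - z‖ := norm_sub_rev _ _
        _ ≤ 5*ε := hw'z
    linarith [hz1]
  · intro i
    obtain ⟨hlow1, hlow2⟩ := hzlow i
    have hw'z2 : ‖z - w'‖ ≤ 5*ε := by rw [norm_sub_rev]; exact hw'z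
    obtain ⟨hup1, hup2⟩ := hz3 i
    have hp : |‖x i + w'‖ - ‖x i + z‖| ≤ 5*ε := by
      have h := norm_sub_norm_le (x i + w') (x i + z)
      have h2 := norm_sub_norm_le (x i + z) (x i + w')
      have heq : (x i + w') - (x i + z) = w' - z := by abel
      have heq2 : (x i + z) - (x i + w') = z - w' := by abel
      rw [heq] at h; rw [heq2] at h2
      rw [abs_le]
      constructor
      · have := h2.trans hw'z2
        linarith
      · exact h.trans hw'z
    have hq : |‖x i - w'‖ - ‖x i - z‖| ≤ 5*ε := by
      have h := norm_sub_norm_le (x i - w') (x i - z)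
      have h2 := norm_sub_norm_le (x i - z) (x i - w')
      have heq : (x i - w') - (x i - z) = z - w' := by abel
      have heq2 : (x i - z) - (x i - w') = w' - z := by abel
      rw [heq] at h; rw [heq2] at h2
      rw [abs_le]
      constructor
      · have := h2.trans hw'z
        linarith
      · exact h.trans hw'z2
    have hp' := abs_le.1 hp
    have hq' := abs_le.1 hq
    exact ⟨by linarith, by linarith, by linarith, by linarith⟩

end Aux

/-- If a closed finite-codimensional subspace `Y` of a Banach space `X` is not
almost square, then `X` is not almost square. -/
theorem not_ASQ_of_finite_codim_subspace
    (X : Type*) [NormedAddCommGroup X] [NormedSpace ℝ X] [CompleteSpace X]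
    (Y : Submodule ℝ X) (hYc : IsClosed (Y : Set X))
    (hcodim : FiniteDimensional ℝ (X ⧸ Y))
    (hY : ¬ IsASQ Y) : ¬ IsASQ X := by
  intro hX
  apply hY
  intro k x hx
  have hcoe : ∀ i, ‖((x i : Y) : X)‖ = 1 := fun i => hx i
  have key : ∀ n : ℕ, ∃ w : X, w ∈ Y ∧ ‖w‖ ≤ 1 ∧ 1 - 1/((n:ℝ)+1) ≤ ‖w‖ ∧
      ∀ i, ‖(x i : X) + w‖ ≤ 1 + 1/((n:ℝ)+1) ∧ 1 - 1/((n:ℝ)+1) ≤ ‖(x i : X) + w‖ ∧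
           ‖(x i : X) - w‖ ≤ 1 + 1/((n:ℝ)+1) ∧ 1 - 1/((n:ℝ)+1) ≤ ‖(x i : X) - w‖ := by
    intro n
    have hpos : (0:ℝ) < 1/((n:ℝ)+1) := by positivity
    have hle : 1/((n:ℝ)+1) ≤ 1 := by
      rw [div_le_one (by positivity)]
      simp
    obtain ⟨w, h1, h2, h3, h4⟩ := asq_core Y hYc hcodim hX (fun i => (x i : X)) hcoe
      (ε := 1/((n:ℝ)+1)/9) (by positivity) (by linarith)
    have h9 : 9 * (1/((n:ℝ)+1)/9) = 1/((n:ℝ)+1) := by ring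
    rw [h9] at h3 h4
    exact ⟨w, h1, h2, h3, h4⟩
  choose w hw1 hw2 hw3 hw4 using key
  have h0 : Tendsto (fun n : ℕ => 1/((n:ℝ)+1)) atTop (nhds 0) :=
    tendsto_one_div_add_atTop_nhds_zero_nat
  have hel : Tendsto (fun n : ℕ => 1 - 1/((n:ℝ)+1)) atTop (nhds 1) := by
    have := tendsto_const_nhds (x := (1:ℝ)) (f := atTop (α := ℕ)) |>.sub h0
    simpa using this
  have heu : Tendsto (fun n : ℕ => 1 + 1/((n:ℝ)+1)) atTop (nhds 1) := by
    have := tendsto_const_nhds (x := (1:ℝ)) (f := atTop (α := ℕ)) |>.add h0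
    simpa using this
  refine ⟨fun n => ⟨w n, hw1 n⟩, fun n => hw2 n, ?_, fun i => ⟨?_, ?_⟩⟩
  · exact tendsto_of_tendsto_of_tendsto_of_le_of_le hel heu
      (fun n => hw3 n) (fun n => by
        have : ‖(⟨w n, hw1 n⟩ : Y)‖ ≤ 1 := hw2 n
        have hp : (0:ℝ) ≤ 1/((n:ℝ)+1) := by positivity
        linarith)
  · exact tendsto_of_tendsto_of_tendsto_of_le_of_le hel heu
      (fun n => (hw4 n i).2.1) (fun n => (hw4 n i).1)
  · exact tendsto_of_tendsto_of_tendsto_of_le_of_le hel heu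
      (fun n => (hw4 n i).2.2.2) (fun n => (hw4 n i).2.2.1)
end

section
/- Let Λ = (λ_i)_{i≥1} be a strictly increasing sequence with λ_1 ≥ 1 and Σ 1/λ_i < ∞, and assume the bounded Bernstein inequality holds for Π(Λ) = span{t^{λ_i}}: for every a ∈ (0,1) there is c_a with ‖p'‖_{[0,a]} ≤ c_a‖p‖_∞ for all p ∈ Π(Λ). Then the Müntz space M(Λ) = closure of Π(Λ) in C[0,1] is not locally almost square. -/
open Filter

/-- A normed space `E` is locally almost square (LASQ). -/
def IsLASQ (E : Type*) [NormedAddCommGroup E] : Prop :=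
  ∀ x : E, ‖x‖ = 1 →
    ∃ y : ℕ → E, (∀ n, ‖y n‖ ≤ 1) ∧
      Tendsto (fun n => ‖y n‖) atTop (nhds 1) ∧
      Tendsto (fun n => ‖x + y n‖) atTop (nhds 1) ∧
      Tendsto (fun n => ‖x - y n‖) atTop (nhds 1)

/-- The monomial `t ↦ t^λ` (with `0 ≤ λ`) as an element of `C[0,1]`. -/
noncomputable def monomial (lam : ℝ) (hlam : 0 ≤ lam) : C(Set.Icc (0:ℝ) 1, ℝ) :=
  ⟨fun t => (t : ℝ) ^ lam,
    Continuous.rpow_const continuous_subtype_val (fun _ => Or.inr hlam)⟩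

lemma abs_add_abs_le_max (a b : ℝ) : |a| + |b| ≤ max |a+b| |a-b| := by
  rcases le_total 0 a with ha|ha <;> rcases le_total 0 b with hb|hb
  · exact le_max_of_le_left (by rw [abs_of_nonneg ha, abs_of_nonneg hb]; exact le_abs_self _)
  · refine le_max_of_le_right ?_
    rw [abs_of_nonneg ha, abs_of_nonpos hb]; exact le_abs_self _
  · refine le_max_of_le_right ?_
    rw [abs_of_nonpos ha, abs_of_nonneg hb]
    have := neg_abs_le (a-b); linarith
  · refine le_max_of_le_left ?_
    rw [abs_of_nonpos ha, abs_of_nonpos hb]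
    have := neg_abs_le (a+b); linarith


/-- Proposition 6: if `Λ = (λ_i)` is strictly increasing with `λ_1 ≥ 1` and
`Σ 1/λ_i < ∞`, and the bounded Bernstein inequality holds for
`Π(Λ) = span{t^{λ_i}}` (for every `a ∈ (0,1)` a uniform constant bounds
`‖p'‖_{[0,a]}` by a multiple of `‖p‖_∞`), then the Müntz space
`M(Λ) = closure of Π(Λ)` in `C[0,1]` is not locally almost square. -/
theorem muntz_not_LASQ
    (l : ℕ → ℝ) (hmono : StrictMono l) (hone : 1 ≤ l 0)
    (hsum : Summable fun i => 1 / l i)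
    (hbern : ∀ a ∈ Set.Ioo (0:ℝ) 1, ∃ K : ℝ, ∀ c : ℕ →₀ ℝ, ∀ t ∈ Set.Icc (0:ℝ) a,
      |deriv (fun u : ℝ => ∑ i ∈ c.support, c i * u ^ l i) t| ≤
        K * sSup ((fun u => |∑ i ∈ c.support, c i * u ^ l i|) '' Set.Icc (0:ℝ) 1)) :
    ¬ IsLASQ ((Submodule.span ℝ (Set.range fun i : ℕ =>
        monomial (l i) (zero_le_one.trans (hone.trans (hmono.monotone (Nat.zero_le i)))))).topologicalClosure) := by
  intro h
  have hl : ∀ i, 1 ≤ l i := fun i => hone.trans (hmono.monotone (Nat.zero_le i))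
  set v : ℕ → C(Set.Icc (0:ℝ) 1, ℝ) := fun i : ℕ =>
    monomial (l i) (zero_le_one.trans (hone.trans (hmono.monotone (Nat.zero_le i)))) with hv
  obtain ⟨K, hK⟩ := hbern (1/2) (by norm_num)
  set K' : ℝ := max K 1 with hK'
  have hK'1 : (1:ℝ) ≤ K' := le_max_right _ _
  have hK'0 : (0:ℝ) < K' := lt_of_lt_of_le one_pos hK'1
  -- Step 1: bound on the span
  have key : ∀ p ∈ Submodule.span ℝ (Set.range v), ∀ t : Set.Icc (0:ℝ) 1, (t:ℝ) ≤ 1/2 →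
      |p t| ≤ K' * t * ‖p‖ := by
    intro p hp t ht
    obtain ⟨c, hc⟩ := Finsupp.mem_span_range_iff_exists_finsupp.mp hp
    set f : ℝ → ℝ := fun u : ℝ => ∑ i ∈ c.support, c i * u ^ l i with hf
    have hpf : ∀ u : Set.Icc (0:ℝ) 1, p u = f u := by
      intro u
      rw [← hc]
      simp only [Finsupp.sum, ContinuousMap.sum_apply, ContinuousMap.smul_apply, hv, monomial,
        ContinuousMap.coe_mk, smul_eq_mul, hf]
    have hderiv : ∀ u : ℝ, HasDerivAt f (∑ i ∈ c.support, c i * (l i * u ^ (l i - 1))) u := by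
      intro u
      exact HasDerivAt.fun_sum fun i _ =>
        (Real.hasDerivAt_rpow_const (Or.inr (hl i))).const_mul (c i)
    have hdiff : ∀ u : ℝ, DifferentiableAt ℝ f u := fun u => (hderiv u).differentiableAt
    have hS : sSup ((fun u => |f u|) '' Set.Icc (0:ℝ) 1) ≤ ‖p‖ := by
      refine Real.sSup_le ?_ (norm_nonneg _)
      rintro x ⟨u, hu, rfl⟩
      have h := ContinuousMap.norm_coe_le_norm p ⟨u, hu⟩
      rw [hpf ⟨u, hu⟩] at h
      simpa using h
    have hS0 : 0 ≤ sSup ((fun u => |f u|) '' Set.Icc (0:ℝ) 1) :=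
      Real.sSup_nonneg (by rintro x ⟨u, hu, rfl⟩; exact abs_nonneg _)
    have hf0 : f 0 = 0 := by
      simp only [hf]
      refine Finset.sum_eq_zero fun i _ => ?_
      rw [Real.zero_rpow (by linarith [hl i]), mul_zero]
    rcases eq_or_lt_of_le t.2.1 with h0 | h0
    · rw [hpf t]
      have : (t : ℝ) = 0 := h0.symm
      rw [this, hf0]
      simp
    · -- MVT on [0, t]
      obtain ⟨ξ, hξ, hslope⟩ := exists_hasDerivAt_eq_slope f (deriv f) h0
        (Continuous.continuousOn (by
          exact continuous_finset_sum _ fun i _ =>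
            (continuous_const.mul (Continuous.rpow_const continuous_id (fun _ => Or.inr (by linarith [hl i]))))))
        (fun x _ => (hdiff x).hasDerivAt)
      have hft : f t = deriv f ξ * t := by
        field_simp [hf0] at hslope
        simp only [sub_zero, hf0] at hslope
        rw [hslope]
      have hξmem : ξ ∈ Set.Icc (0:ℝ) (1/2) := ⟨hξ.1.le, hξ.2.le.trans ht⟩
      have hb := hK c ξ hξmem
      rw [hpf t, hft, abs_mul, abs_of_nonneg t.2.1]
      calc |deriv f ξ| * (t:ℝ) ≤ (K * sSup ((fun u => |f u|) '' Set.Icc (0:ℝ) 1)) * t :=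
            mul_le_mul_of_nonneg_right hb t.2.1
        _ ≤ (K' * ‖p‖) * t := by
            apply mul_le_mul_of_nonneg_right _ t.2.1
            calc K * sSup ((fun u => |f u|) '' Set.Icc (0:ℝ) 1)
                ≤ K' * sSup ((fun u => |f u|) '' Set.Icc (0:ℝ) 1) :=
                  mul_le_mul_of_nonneg_right (le_max_left _ _) hS0
              _ ≤ K' * ‖p‖ := mul_le_mul_of_nonneg_left hS hK'0.le
        _ = K' * t * ‖p‖ := by ring
  -- Step 2: bound on the closure
  have key2 : ∀ p : C(Set.Icc (0:ℝ) 1, ℝ), p ∈ (Submodule.span ℝ (Set.range v)).topologicalClosure →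
      ∀ t : Set.Icc (0:ℝ) 1, (t:ℝ) ≤ 1/2 → |p t| ≤ K' * t * ‖p‖ := by
    intro p hp t ht
    have : p ∈ closure ((Submodule.span ℝ (Set.range v)) : Set (C(Set.Icc (0:ℝ) 1, ℝ))) := by
      rwa [← Submodule.topologicalClosure_coe]
    obtain ⟨u, hu, hlim⟩ := mem_closure_iff_seq_limit.mp this
    have h1 : Tendsto (fun n => |u n t|) atTop (nhds |p t|) :=
      ((continuous_abs.comp (continuous_eval_const t)).tendsto p).comp hlim
    have h2 : Tendsto (fun n => K' * t * ‖u n‖) atTop (nhds (K' * t * ‖p‖)) :=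
      (continuous_const.mul continuous_norm).tendsto p |>.comp hlim
    exact le_of_tendsto_of_tendsto' h1 h2 fun n => key (u n) (hu n) t ht
  -- the witness g = t^{l 0}
  have hgmem : v 0 ∈ (Submodule.span ℝ (Set.range v)).topologicalClosure :=
    Submodule.le_topologicalClosure _ (Submodule.subset_span ⟨0, rfl⟩)
  set E := (Submodule.span ℝ (Set.range v)).topologicalClosure
  set gE : E := ⟨v 0, hgmem⟩ with hgE
  have hgnorm : ‖gE‖ = 1 := by
    have h1 : ‖v 0‖ ≤ 1 := by
      rw [ContinuousMap.norm_le _ zero_le_one]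
      intro x
      simp only [hv, monomial, ContinuousMap.coe_mk, Real.norm_eq_abs,
        abs_of_nonneg (Real.rpow_nonneg x.2.1 _)]
      exact Real.rpow_le_one x.2.1 x.2.2 (by linarith [hl 0])
    have h2 : (1:ℝ) ≤ ‖v 0‖ := by
      have := ContinuousMap.norm_coe_le_norm (v 0) ⟨1, by norm_num⟩
      simpa [hv, monomial, Real.one_rpow] using this
    exact le_antisymm h1 (by exact_mod_cast h2)
  obtain ⟨y, hy1, hy2, hy3, hy4⟩ := h gE hgnorm
  -- choose max points
  have hchoice : ∀ n : ℕ, ∃ t : Set.Icc (0:ℝ) 1, ∀ s, |(y n : C(Set.Icc (0:ℝ) 1, ℝ)) s| ≤ |(y n : C(Set.Icc (0:ℝ) 1, ℝ)) t| := by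
    intro n
    obtain ⟨t, -, ht⟩ := isCompact_univ.exists_isMaxOn Set.univ_nonempty
      ((y n : C(Set.Icc (0:ℝ) 1, ℝ)).continuous.abs.continuousOn)
    exact ⟨t, fun s => ht (Set.mem_univ s)⟩
  choose t htmax using hchoice
  have hynorm : ∀ n, ‖y n‖ = |(y n : C(Set.Icc (0:ℝ) 1, ℝ)) (t n)| := by
    intro n
    refine le_antisymm ((ContinuousMap.norm_le _ (abs_nonneg _)).mpr fun s => ?_) ?_
    · rw [Real.norm_eq_abs]; exact htmax n s
    · simpa using ContinuousMap.norm_coe_le_norm (y n : C(Set.Icc (0:ℝ) 1, ℝ)) (t n)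
  -- A n := |g (t n)| → 0
  set A : ℕ → ℝ := fun n => |(v 0 : C(Set.Icc (0:ℝ) 1, ℝ)) (t n)| with hA
  have hA0 : ∀ n, 0 ≤ A n := fun n => abs_nonneg _
  have hAle : ∀ n, A n ≤ max ‖gE + y n‖ ‖gE - y n‖ - ‖y n‖ := by
    intro n
    have hid := abs_add_abs_le_max ((v 0 : C(Set.Icc (0:ℝ) 1, ℝ)) (t n))
      ((y n : C(Set.Icc (0:ℝ) 1, ℝ)) (t n))
    have e1 : |(v 0 : C(Set.Icc (0:ℝ) 1, ℝ)) (t n) + (y n : C(Set.Icc (0:ℝ) 1, ℝ)) (t n)|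
        ≤ ‖gE + y n‖ := by
      have := ContinuousMap.norm_coe_le_norm ((gE + y n : E) : C(Set.Icc (0:ℝ) 1, ℝ)) (t n)
      rw [Submodule.coe_add, ContinuousMap.add_apply, Real.norm_eq_abs] at this
      exact this
    have e2 : |(v 0 : C(Set.Icc (0:ℝ) 1, ℝ)) (t n) - (y n : C(Set.Icc (0:ℝ) 1, ℝ)) (t n)|
        ≤ ‖gE - y n‖ := by
      have := ContinuousMap.norm_coe_le_norm ((gE - y n : E) : C(Set.Icc (0:ℝ) 1, ℝ)) (t n)
      rw [Submodule.coe_sub, ContinuousMap.sub_apply, Real.norm_eq_abs] at this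
      exact this
    have : A n + ‖y n‖ ≤ max ‖gE + y n‖ ‖gE - y n‖ := by
      rw [hynorm n]
      refine hid.trans (max_le_max e1 e2)
    linarith
  have hAtend : Tendsto A atTop (nhds 0) := by
    refine squeeze_zero hA0 hAle ?_
    have : Tendsto (fun n => max ‖gE + y n‖ ‖gE - y n‖ - ‖y n‖) atTop (nhds (max 1 1 - 1)) :=
      (hy3.max hy4).sub hy2
    rwa [max_self, sub_self] at this
  -- eventual contradiction
  have hval : ∀ n, A n = ((t n : ℝ)) ^ l 0 := by
    intro n
    simp only [hA, hv, monomial, ContinuousMap.coe_mk]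
    exact abs_of_nonneg (Real.rpow_nonneg (t n).2.1 _)
  have E1 : ∀ᶠ n in atTop, ((t n : ℝ)) ≤ 1/2 := by
    have hpos : (0:ℝ) < (1/2 : ℝ) ^ l 0 := Real.rpow_pos_of_pos (by norm_num) _
    filter_upwards [hAtend.eventually (eventually_lt_nhds hpos)] with n hn
    by_contra hcon
    push_neg at hcon
    have : ((1:ℝ)/2) ^ l 0 ≤ ((t n : ℝ)) ^ l 0 :=
      Real.rpow_le_rpow (by norm_num) hcon.le (by linarith [hl 0])
    rw [← hval n] at this
    linarith
  have E2 : ∀ᶠ n in atTop, (1/2 : ℝ) ≤ ‖y n‖ :=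
    hy2.eventually (eventually_ge_nhds (by norm_num))
  have E3 : ∀ᶠ n in atTop, A n < (1/(2*K')) ^ l 0 :=
    hAtend.eventually (eventually_lt_nhds (Real.rpow_pos_of_pos (by positivity) _))
  obtain ⟨n, h1, h2, h3⟩ := (E1.and (E2.and E3)).exists
  -- bound from key2
  have hb : |(y n : C(Set.Icc (0:ℝ) 1, ℝ)) (t n)| ≤ K' * (t n) * ‖y n‖ :=
    key2 (y n) (y n).2 (t n) h1
  rw [← hynorm n] at hb
  have hyn1 : ‖y n‖ ≤ 1 := hy1 n
  have htn0 : (0:ℝ) ≤ (t n : ℝ) := (t n).2.1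
  have hb2 : (1/2 : ℝ) ≤ K' * (t n) := by
    nlinarith
  have htlow : (1 : ℝ)/(2*K') ≤ (t n : ℝ) := by
    rw [div_le_iff₀ (by positivity)]
    linarith [mul_comm (K') ((t n : ℝ))]
  have : ((1:ℝ)/(2*K')) ^ l 0 ≤ A n := by
    rw [hval n]
    exact Real.rpow_le_rpow (by positivity) htlow (by linarith [hl 0])
  linarith
end

section
/- The space c of convergent real sequences with the supremum norm is not locally octahedral. -/
open Filter

/-- The first standard basis sequence `(1,0,0,…)` as a bounded function. -/
noncomputable def e0 : BoundedContinuousFunction ℕ ℝ :=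
  BoundedContinuousFunction.ofNormedAddCommGroup
    (fun n => if n = 0 then 1 else 0)
    (continuous_of_discreteTopology) 1
    (by intro n; by_cases h : n = 0 <;> simp [h])

lemma e0_apply (n : ℕ) : e0 n = if n = 0 then 1 else 0 := rfl

lemma e0_mem : e0 ∈ convSeqs := by
  refine ⟨0, ?_⟩
  apply Tendsto.congr' (f₁ := fun _ => (0:ℝ))
  · filter_upwards [Filter.eventually_ge_atTop 1] with n hn
    have : n ≠ 0 := by omega
    simp [e0_apply, this]
  · exact tendsto_const_nhds

lemma e0_norm : ‖e0‖ = 1 := by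
  apply le_antisymm
  · refine (BoundedContinuousFunction.norm_le (by norm_num)).2 ?_
    intro n
    rw [e0_apply]
    by_cases h : n = 0 <;> simp [h]
  · have h := e0.norm_coe_le_norm 0
    have h0 : ‖e0 0‖ = 1 := by rw [e0_apply]; norm_num
    linarith [h0 ▸ h]

/-- The space `c` of convergent sequences with the sup norm is not locally
octahedral. -/
theorem c_not_LOH :
    ¬ ∀ x : convSeqs, ‖x‖ = 1 → ∀ ε > (0:ℝ), ∃ y : convSeqs, ‖y‖ = 1 ∧
      2 - ε < ‖x + y‖ ∧ 2 - ε < ‖x - y‖ := by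
  intro h
  obtain ⟨y, hy1, hadd, hsub⟩ :=
    h ⟨e0, e0_mem⟩ (by simpa [Submodule.norm_coe] using e0_norm) (1/2) (by norm_num)
  -- norms as bounded functions
  have hyb : ∀ n, |(y : BoundedContinuousFunction ℕ ℝ) n| ≤ 1 := by
    intro n
    have h := (y : BoundedContinuousFunction ℕ ℝ).norm_coe_le_norm n
    rw [Submodule.norm_coe, hy1] at h
    simpa using h
  -- key bound: if the value at 0 is small, sup norm of e0 ± y is ≤ 3/2
  have key : ∀ z : BoundedContinuousFunction ℕ ℝ, (∀ n, |z n| ≤ 1) →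
      z 0 ≤ 1/2 → ‖e0 + z‖ ≤ 3/2 := by
    intro z hz hz0
    rw [BoundedContinuousFunction.norm_le (by norm_num)]
    intro n
    by_cases hn : n = 0
    · subst hn
      have h1 := hz 0
      have : |(1 : ℝ) + z 0| ≤ 3/2 := by
        rw [abs_le] at h1 ⊢; constructor <;> linarith [h1.1, h1.2]
      simpa [e0_apply] using this
    · have := hz n
      simp only [BoundedContinuousFunction.coe_add, Pi.add_apply, e0_apply, hn, if_neg hn]
      simpa using (by linarith [hz n] : |z n| ≤ 3/2)
  have hy0pos : (y : BoundedContinuousFunction ℕ ℝ) 0 > 1/2 := by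
    by_contra hc
    push_neg at hc
    have := key (y : BoundedContinuousFunction ℕ ℝ) hyb hc
    have hnorm : ‖(⟨e0, e0_mem⟩ + y : convSeqs)‖ = ‖e0 + (y : BoundedContinuousFunction ℕ ℝ)‖ := rfl
    rw [hnorm] at hadd
    linarith
  have hy0neg : -(y : BoundedContinuousFunction ℕ ℝ) 0 > 1/2 := by
    by_contra hc
    push_neg at hc
    have hb : ∀ n, |(-(y : BoundedContinuousFunction ℕ ℝ)) n| ≤ 1 := by
      intro n; simpa using hyb n
    have := key (-(y : BoundedContinuousFunction ℕ ℝ)) hb (by simpa using hc)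
    have hnorm : ‖(⟨e0, e0_mem⟩ - y : convSeqs)‖ = ‖e0 + (-(y : BoundedContinuousFunction ℕ ℝ))‖ := by
      rw [← sub_eq_add_neg]; rfl
    rw [hnorm] at hsub
    linarith
  linarith
end
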